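/- Let P ⊆ M_ℝ be a polyhedral set defined by inequalities ν_j(ξ) + α_j ≥ 0 (j = 1,…,r) with all α_j > 0, and assume 0 ∈ int(P). Given ν_0 ∈ N_ℝ and α_0 > 0, the set P is contained in the affine half-space { ξ | ν_0(ξ) + α_0 ≥ 0 } if and only if ν_0/α_0 lies in the convex hull of { ν_j/α_j : j = 1,…,r } ∪ { 0 }. -/

import Mathlib

/-!
`P` is the polar of the finite set `S = {ν j / α j} ∪ {0}`, and `P` lies in the half-space of
`ν₀, α₀` exactly when `ν₀ / α₀` lies in `P°`. So the claim is the bipolar theorem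
`S°° = conv S`. Half-spaces of functionals are convex, which gives `conv S ⊆ S°°`. Conversely a
functional `w ∉ conv S` is strictly separated from this compact convex set by a functional on the
dual, i.e. (by reflexivity) by evaluation at some `ξ`; since `0 ∈ S` the separating level is
negative, and rescaling `ξ` gives a point of `S°` at which `w + 1 < 0`.
-/

/-- `W` carries no topology, so Hahn–Banach is applied in coordinates. -/
theorem exists_dual_lt_of_notMem_convexHull {W : Type*} [AddCommGroup W] [Module ℝ W]
    [FiniteDimensional ℝ W] {S : Set W} (hS : S.Finite) {w : W} (hw : w ∉ convexHull ℝ S) :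
    ∃ (f : Module.Dual ℝ W) (u : ℝ), f w < u ∧ ∀ s ∈ S, u < f s := by
  let T := (Module.finBasis ℝ W).equivFun
  have hTw : T w ∉ convexHull ℝ (T '' S) := by
    have himage := T.toLinearMap.image_convexHull (𝕜 := ℝ) S
    rw [LinearEquiv.coe_coe] at himage
    rwa [← himage, T.injective.mem_set_image]
  obtain ⟨f, u, hfw, hfS⟩ := geometric_hahn_banach_point_closed (convex_convexHull ℝ _)
    ((hS.image T).isCompact_convexHull (𝕜 := ℝ)).isClosed hTw
  exact ⟨f.toLinearMap ∘ₗ T.toLinearMap, u, hfw,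
    fun s hs => hfS _ (subset_convexHull ℝ _ (Set.mem_image_of_mem T hs))⟩

section Polar

variable {V : Type*} [AddCommGroup V] [Module ℝ V]

def polar (C : Set (Module.Dual ℝ V)) : Set V :=
  {ξ | ∀ ν ∈ C, 0 ≤ ν ξ + 1}

theorem polar_union_zero (C : Set (Module.Dual ℝ V)) : polar (C ∪ {0}) = polar C := by
  ext ξ
  simp [polar]

theorem inv_smul_apply_add_one_nonneg_iff {α : ℝ} (hα : 0 < α) (ν : Module.Dual ℝ V) (ξ : V) :
    0 ≤ (α⁻¹ • ν) ξ + 1 ↔ 0 ≤ ν ξ + α := by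
  have h : (α⁻¹ • ν) ξ + 1 = α⁻¹ * (ν ξ + α) := by
    rw [LinearMap.smul_apply, smul_eq_mul, mul_add, inv_mul_cancel₀ hα.ne']
  rw [h, mul_nonneg_iff_of_pos_left (inv_pos.2 hα)]

theorem apply_add_one_nonneg_of_mem_convexHull {S : Set (Module.Dual ℝ V)} {w : Module.Dual ℝ V}
    (hw : w ∈ convexHull ℝ S) {ξ : V} (hξ : ξ ∈ polar S) : 0 ≤ w ξ + 1 := by
  have hconv : Convex ℝ {ν : Module.Dual ℝ V | -1 ≤ ν ξ} :=
    convex_halfSpace_ge (Module.Dual.eval ℝ V ξ).isLinear (-1)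
  have hw' := convexHull_min (fun ν hν => neg_le_iff_add_nonneg.2 (hξ ν hν)) hconv hw
  exact neg_le_iff_add_nonneg.1 hw'

/-- The bipolar theorem `S°° = conv S` for a finite set `S ∋ 0`. -/
theorem mem_convexHull_iff_forall_mem_polar [FiniteDimensional ℝ V] {S : Set (Module.Dual ℝ V)}
    (hS : S.Finite) (h0 : 0 ∈ S) (w : Module.Dual ℝ V) :
    w ∈ convexHull ℝ S ↔ ∀ ξ ∈ polar S, 0 ≤ w ξ + 1 := by
  refine ⟨fun hw ξ hξ => apply_add_one_nonneg_of_mem_convexHull hw hξ, fun h => ?_⟩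
  by_contra hw
  obtain ⟨f, u, hfw, hfS⟩ := exists_dual_lt_of_notMem_convexHull hS hw
  have hu : 0 < -u := neg_pos.2 (by simpa using hfS 0 h0)
  -- `f` is evaluation at `ξ`, and rescaling `ξ` by `(-u)⁻¹` moves the separating level `u` to `-1`.
  set ξ := (Module.evalEquiv ℝ V).symm f
  have hξ : ∀ ν : Module.Dual ℝ V, ν ξ = f ν := fun ν => Module.apply_evalEquiv_symm_apply ℝ V ν f
  have hscale : ∀ ν : Module.Dual ℝ V, ν ((-u)⁻¹ • ξ) + 1 = (-u)⁻¹ * (f ν - u) := by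
    intro ν
    rw [map_smul, hξ, smul_eq_mul, sub_eq_add_neg, mul_add, inv_mul_cancel₀ hu.ne']
  have hpolar : (-u)⁻¹ • ξ ∈ polar S := fun ν hν => by
    rw [hscale]
    exact mul_nonneg (inv_pos.2 hu).le (sub_pos.2 (hfS ν hν)).le
  have hneg : w ((-u)⁻¹ • ξ) + 1 < 0 := by
    rw [hscale]
    exact mul_neg_of_pos_of_neg (inv_pos.2 hu) (sub_neg.2 hfw)
  exact hneg.not_ge (h _ hpolar)

end Polar

theorem stmt_2_general {V : Type*} [NormedAddCommGroup V] [NormedSpace ℝ V]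
    [FiniteDimensional ℝ V] (r : ℕ) (ν : Fin r → V →ₗ[ℝ] ℝ) (α : Fin r → ℝ)
    (hα : ∀ j, 0 < α j) (P : Set V)
    (hP : P = {ξ : V | ∀ j, ν j ξ + α j ≥ 0})
    (ν₀ : V →ₗ[ℝ] ℝ) (α₀ : ℝ) (hα₀ : 0 < α₀) :
    (∀ ξ ∈ P, ν₀ ξ + α₀ ≥ 0) ↔
      α₀⁻¹ • ν₀ ∈ convexHull ℝ (Set.range (fun j => (α j)⁻¹ • ν j) ∪ {0}) := by
  have hP_polar : P = polar (Set.range (fun j => (α j)⁻¹ • ν j) ∪ {0}) := by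
    rw [hP, polar_union_zero]
    ext ξ
    simp only [polar, Set.mem_ofPred_eq, Set.forall_mem_range,
      inv_smul_apply_add_one_nonneg_iff (hα _), ge_iff_le]
  have hfinite := (Set.finite_range fun j => (α j)⁻¹ • ν j).union (Set.finite_singleton 0)
  rw [mem_convexHull_iff_forall_mem_polar hfinite (Or.inr rfl), ← hP_polar]
  simp only [inv_smul_apply_add_one_nonneg_iff hα₀, ge_iff_le]

/-- Let `P = {ξ | ν j ξ + α j ≥ 0}` with all `α j > 0` and `0 ∈ int P`.  Given `ν₀` and
`α₀ > 0`, `P` is contained in the affine half-space `{ξ | ν₀ ξ + α₀ ≥ 0}` if and only if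
`ν₀ / α₀` lies in the convex hull of `{ν j / α j} ∪ {0}`. -/
theorem stmt_2 {V : Type*} [NormedAddCommGroup V] [NormedSpace ℝ V]
    [FiniteDimensional ℝ V] (r : ℕ) (ν : Fin r → V →ₗ[ℝ] ℝ) (α : Fin r → ℝ)
    (hα : ∀ j, 0 < α j) (P : Set V)
    (hP : P = {ξ : V | ∀ j, ν j ξ + α j ≥ 0})
    (h0 : (0 : V) ∈ interior P)
    (ν₀ : V →ₗ[ℝ] ℝ) (α₀ : ℝ) (hα₀ : 0 < α₀) :
    (∀ ξ ∈ P, ν₀ ξ + α₀ ≥ 0) ↔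
      α₀⁻¹ • ν₀ ∈ convexHull ℝ (Set.range (fun j => (α j)⁻¹ • ν j) ∪ {0}) :=
  stmt_2_general r ν α hα P hP ν₀ α₀ hα₀
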